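/- Let (X, D) be the amalgamation of a metric d along a finite clopen partition {B_i}_{i=1}^n with metrics e_i on B_i, where each B_i has at least two points and X is bounded. If every (B_i, e_i) is uniformly perfect, then (X, D) is uniformly perfect. -/

import Mathlib

open Set Topology

/-- `d` is a metric (as a two-variable real function) on the whole type `X`. -/
def IsMetricOn {X : Type*} (d : X → X → ℝ) : Prop :=
  (∀ x y, d x y = 0 ↔ x = y) ∧ (∀ x y, d x y = d y x) ∧ ∀ x y z, d x y ≤ d x z + d z y

/-- `d` is a metric on the subset `A` of `X`. -/
def IsMetricOnSet {X : Type*} (A : Set X) (d : X → X → ℝ) : Prop :=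
  (∀ x ∈ A, ∀ y ∈ A, (d x y = 0 ↔ x = y)) ∧ (∀ x ∈ A, ∀ y ∈ A, d x y = d y x) ∧
    ∀ x ∈ A, ∀ y ∈ A, ∀ z ∈ A, d x y ≤ d x z + d z y

/-- Diameter of the set `A` with respect to the distance function `d`. -/
noncomputable def setDiam {X : Type*} (A : Set X) (d : X → X → ℝ) : ℝ :=
  sSup {r : ℝ | ∃ x ∈ A, ∃ y ∈ A, d x y = r}

/-- `d` is uniformly perfect on `A`: there is `c ∈ (0,1)` such that for every `x ∈ A`
and every `r ∈ (0, diam_d A)` there is `y ∈ A` with `c·r ≤ d(x,y) ≤ r`. -/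
def UniformlyPerfectOn {X : Type*} (A : Set X) (d : X → X → ℝ) : Prop :=
  ∃ c : ℝ, 0 < c ∧ c < 1 ∧ ∀ x ∈ A, ∀ r : ℝ, 0 < r → r < setDiam A d →
    ∃ y ∈ A, c * r ≤ d x y ∧ d x y ≤ r

/-!
Only the blocks matter: every point lies in a block, on which `D` is the block metric. A block
of diameter `δ > 0` that is uniformly perfect with constant `c` satisfies the same inequality at
every scale `r ≤ Λ`, with constant `c δ / (2 max Λ δ)`, by applying uniform perfectness at the
scale `min r (δ / 2)`. Taking `Λ = diam_D X`, the smallest of these finitely many constants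
works for `D`.
-/

def PerfectAtScales {X : Type*} (A : Set X) (d : X → X → ℝ) (c Λ : ℝ) : Prop :=
  ∀ x ∈ A, ∀ r : ℝ, 0 < r → r ≤ Λ → ∃ y ∈ A, c * r ≤ d x y ∧ d x y ≤ r

section

variable {X : Type*} {A : Set X} {d : X → X → ℝ}

lemma IsMetricOnSet.nonneg (hd : IsMetricOnSet A d) {x y : X} (hx : x ∈ A) (hy : y ∈ A) :
    0 ≤ d x y := by
  have h := hd.2.2 x hx x hx y hy
  rw [(hd.1 x hx x hx).2 rfl, hd.2.1 y hy x hx] at h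
  linarith

lemma setDiam_pos (hd : IsMetricOnSet A d) (hbdd : BddAbove {r | ∃ x ∈ A, ∃ y ∈ A, d x y = r})
    {x y : X} (hx : x ∈ A) (hy : y ∈ A) (hxy : x ≠ y) : 0 < setDiam A d :=
  (lt_of_le_of_ne (hd.nonneg hx hy) fun h => hxy ((hd.1 x hx y hy).1 h.symm)).trans_le
    (le_csSup hbdd ⟨x, hx, y, hy, rfl⟩)

lemma PerfectAtScales.mono_const {c c' Λ : ℝ} (h : PerfectAtScales A d c Λ) (hc : c' ≤ c) :
    PerfectAtScales A d c' Λ := fun x hx r hr hrΛ =>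
  (h x hx r hr hrΛ).imp fun _ ⟨hy, hlo, hhi⟩ =>
    ⟨hy, (mul_le_mul_of_nonneg_right hc hr.le).trans hlo, hhi⟩

lemma UniformlyPerfectOn.perfectAtScales (h : UniformlyPerfectOn A d) (hA : 0 < setDiam A d)
    (Λ : ℝ) : ∃ c, 0 < c ∧ c < 1 ∧ PerfectAtScales A d c Λ := by
  obtain ⟨c, hc0, hc1, hc⟩ := h
  set δ := setDiam A d
  set M := max Λ δ
  have hM : 0 < M := lt_max_of_lt_right hA
  have hδM : δ ≤ M := le_max_right Λ δ
  refine ⟨c * δ / (2 * M), by positivity, ?_, fun x hx r hr hrΛ => ?_⟩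
  · rw [div_lt_one (by positivity)]
    nlinarith
  obtain ⟨y, hy, hlo, hhi⟩ := hc x hx (min r (δ / 2)) (lt_min hr (half_pos hA))
    ((min_le_right _ _).trans_lt (half_lt_self hA))
  refine ⟨y, hy, le_trans ?_ hlo, hhi.trans (min_le_left _ _)⟩
  have hrM : r ≤ M := hrΛ.trans (le_max_left Λ δ)
  have hscale : δ * r / (2 * M) ≤ min r (δ / 2) := by
    refine le_min ?_ ?_ <;> rw [div_le_iff₀ (by positivity)] <;> nlinarith
  calc c * δ / (2 * M) * r = c * (δ * r / (2 * M)) := by ring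
    _ ≤ c * min r (δ / 2) := mul_le_mul_of_nonneg_left hscale hc0.le

lemma exists_forall_perfectAtScales {ι : Type*} [Finite ι] {A : ι → Set X}
    {d : ι → X → X → ℝ} {Λ : ℝ} (h : ∀ i, ∃ c, 0 < c ∧ c < 1 ∧ PerfectAtScales (A i) (d i) c Λ) :
    ∃ c, 0 < c ∧ c < 1 ∧ ∀ i, PerfectAtScales (A i) (d i) c Λ := by
  choose c hc0 hc1 hc using h
  have : Nonempty (Ioo (0 : ℝ) 1) := (nonempty_Ioo.2 one_pos).to_subtype
  obtain ⟨⟨c₀, hc₀0, hc₀1⟩, hle⟩ :=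
    Finite.exists_ge fun i => (⟨c i, hc0 i, hc1 i⟩ : Ioo (0 : ℝ) 1)
  exact ⟨c₀, hc₀0, hc₀1, fun i => (hc i).mono_const (hle i)⟩

theorem uniformlyPerfectOn_of_finite_cover {ι : Type*} [Finite ι] {D : X → X → ℝ}
    (B : ι → Set X) (e : ι → X → X → ℝ) (hBA : ∀ i, B i ⊆ A) (hcover : ∀ x ∈ A, ∃ i, x ∈ B i)
    (hDe : ∀ i, ∀ x ∈ B i, ∀ y ∈ B i, D x y = e i x y) (hpos : ∀ i, 0 < setDiam (B i) (e i))
    (hup : ∀ i, UniformlyPerfectOn (B i) (e i)) : UniformlyPerfectOn A D := by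
  obtain ⟨c, hc0, hc1, hc⟩ := exists_forall_perfectAtScales fun i =>
    (hup i).perfectAtScales (hpos i) (setDiam A D)
  refine ⟨c, hc0, hc1, fun x hx r hr hrA => ?_⟩
  obtain ⟨i, hxi⟩ := hcover x hx
  obtain ⟨y, hy, hlo, hhi⟩ := hc i x hxi r hr hrA.le
  rw [← hDe i x hxi y hy] at hlo hhi
  exact ⟨y, hBA i hy, hlo, hhi⟩

end

theorem amalgamation_uniformlyPerfect_general {X : Type*} {n : ℕ}
    (B : Fin n → Set X)
    (htwo : ∀ i, ∃ x ∈ B i, ∃ y ∈ B i, x ≠ y)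
    (hdisj : ∀ i j, i ≠ j → Disjoint (B i) (B j))
    (e : Fin n → (X → X → ℝ)) (he : ∀ i, IsMetricOnSet (B i) (e i))
    (ι : X → Fin n) (hι : ∀ x, x ∈ B (ι x))
    (D : X → X → ℝ)
    (hDeq : ∀ x y, ι x = ι y → D x y = e (ι x) x y)
    (hbdd : ∃ R : ℝ, ∀ x y, D x y ≤ R)
    (hup : ∀ i, UniformlyPerfectOn (B i) (e i)) :
    UniformlyPerfectOn (Set.univ : Set X) D := by
  obtain ⟨R, hR⟩ := hbdd
  have hιeq : ∀ i, ∀ x ∈ B i, ι x = i := fun i x hx =>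
    of_not_not fun hne => disjoint_left.mp (hdisj _ _ hne) (hι x) hx
  have hDe : ∀ i, ∀ x ∈ B i, ∀ y ∈ B i, D x y = e i x y := fun i x hx y hy => by
    rw [hDeq x y ((hιeq i x hx).trans (hιeq i y hy).symm), hιeq i x hx]
  have hpos : ∀ i, 0 < setDiam (B i) (e i) := fun i => by
    obtain ⟨x, hx, y, hy, hxy⟩ := htwo i
    refine setDiam_pos (he i) ⟨R, ?_⟩ hx hy hxy
    rintro _ ⟨a, ha, b, hb, rfl⟩
    exact hDe i a ha b hb ▸ hR a b
  exact uniformlyPerfectOn_of_finite_cover B e (fun _ => subset_univ _)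
    (fun x _ => ⟨ι x, hι x⟩) hDe hpos hup

/-- If every block of a finite amalgamation (with blocks having at least two points,
on a bounded space) is uniformly perfect, so is the amalgam. -/
theorem amalgamation_uniformlyPerfect {X : Type*} [TopologicalSpace X] {n : ℕ}
    (d : X → X → ℝ) (hd : IsMetricOn d)
    (B : Fin n → Set X) (hBclopen : ∀ i, IsClopen (B i))
    (htwo : ∀ i, ∃ x ∈ B i, ∃ y ∈ B i, x ≠ y)
    (hdisj : ∀ i j, i ≠ j → Disjoint (B i) (B j)) (hcover : ⋃ i, B i = univ)
    (p : Fin n → X) (hp : ∀ i, p i ∈ B i)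
    (e : Fin n → (X → X → ℝ)) (he : ∀ i, IsMetricOnSet (B i) (e i))
    (ι : X → Fin n) (hι : ∀ x, x ∈ B (ι x))
    (D : X → X → ℝ)
    (hDeq : ∀ x y, ι x = ι y → D x y = e (ι x) x y)
    (hDne : ∀ x y, ι x ≠ ι y →
      D x y = e (ι x) x (p (ι x)) + d (p (ι x)) (p (ι y)) + e (ι y) (p (ι y)) y)
    (hbdd : ∃ R : ℝ, ∀ x y, D x y ≤ R)
    (hup : ∀ i, UniformlyPerfectOn (B i) (e i)) :
    UniformlyPerfectOn (Set.univ : Set X) D :=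
  amalgamation_uniformlyPerfect_general B htwo hdisj e he ι hι D hDeq hbdd hup
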